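/- arXiv:1109.4085 — 2 statements merged into one kernel-verified Lean document; each statement's English description precedes it below -/
import Mathlib

section
/- Sliding mode condition for the hybrid cycle (tentacle S₄): for the piecewise vector fields f⁺(u) = (k₁ e^{−u₄}, −k₆) and f⁻(u) = (−k₄ e^{2u₃}, −k₆) in coordinates (u₄, u₃) across the line Σ = {h₃ − h₄ + 2u₃ + u₄ = 0} with interior normals n⁺ = (−1, −2) = −n⁻, the Filippov sliding conditions ⟨n⁺, f⁺⟩ < 0 and ⟨n⁻, f⁻⟩ < 0 hold at a point of Σ if and only if u₄ < log(k₁/(2k₆)). -/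
/-- Sliding mode condition on the tentacle `S₄`: with
`f⁺ = (k₁e^{−u₄}, −k₆)`, `f⁻ = (−k₄e^{2u₃}, −k₆)` in coordinates `(u₄,u₃)`,
normals `n⁺ = (−1,−2) = −n⁻`, on `Σ = {h₃ − h₄ + 2u₃ + u₄ = 0}`, Filippov's
conditions `⟨n⁺,f⁺⟩ < 0` and `⟨n⁻,f⁻⟩ < 0` hold iff `u₄ < log(k₁/(2k₆))`. -/
theorem sliding_mode_S4
    (k₁ k₄ k₆ : ℝ) (hk₁ : 0 < k₁) (hk₄ : 0 < k₄) (hk₆ : 0 < k₆)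
    (h₃ h₄ : ℝ) (u₃ u₄ : ℝ) (hSigma : h₃ - h₄ + 2 * u₃ + u₄ = 0) :
    (((-1 : ℝ) * (k₁ * Real.exp (-u₄)) + (-2 : ℝ) * (-k₆) < 0) ∧
     ((1 : ℝ) * (-(k₄ * Real.exp (2 * u₃))) + (2 : ℝ) * (-k₆) < 0)) ↔
    u₄ < Real.log (k₁ / (2 * k₆)) := by
  have hsec : (1 : ℝ) * (-(k₄ * Real.exp (2 * u₃))) + (2 : ℝ) * (-k₆) < 0 := by
    nlinarith [Real.exp_pos (2 * u₃)]
  have hpos : 0 < k₁ / (2 * k₆) := by positivity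
  constructor
  · rintro ⟨h1, -⟩
    rw [Real.lt_log_iff_exp_lt hpos]
    rw [lt_div_iff₀ (by linarith)]
    have := Real.exp_pos (-u₄)
    have he : Real.exp u₄ * Real.exp (-u₄) = 1 := by
      rw [← Real.exp_add]; simp
    nlinarith
  · intro h
    refine ⟨?_, hsec⟩
    rw [Real.lt_log_iff_exp_lt hpos, lt_div_iff₀ (by linarith)] at h
    have he : Real.exp u₄ * Real.exp (-u₄) = 1 := by
      rw [← Real.exp_add]; simp
    nlinarith [Real.exp_pos (-u₄), Real.exp_pos u₄]
end

section
/- For the reduced 2D system y₃' = k₄'y₄ + (k₄/C²)y₄y₃² − k₆y₃, y₄' = −k₄'y₄ − (k₄/C²)y₄y₃² + k₁ with all parameters positive, the positive quadrant ℝ₊² is positively invariant: any solution with y₃(0) > 0, y₄(0) > 0 satisfies y₃(t) > 0 and y₄(t) > 0 for all t ≥ 0 in its interval of existence. -/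
open Filter Topology

/-- If `f` has derivative `d` at `τ`, vanishes at `τ`, and is eventually
positive on the left of `τ`, then `d ≤ 0`. -/
lemma left_deriv_nonpos_aux {f : ℝ → ℝ} {τ d : ℝ} (hf : HasDerivAt f d τ)
    (h0 : f τ = 0) (hpos : ∀ᶠ t in 𝓝[<] τ, 0 < f t) : d ≤ 0 := by
  have hmono : 𝓝[<] τ ≤ 𝓝[≠] τ :=
    nhdsWithin_mono τ (fun x hx => ne_of_lt hx)
  have h := (hasDerivAt_iff_tendsto_slope.mp hf).mono_left hmono
  refine le_of_tendsto h ?_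
  filter_upwards [hpos, self_mem_nhdsWithin] with t ht htlt
  have hs : slope f τ t = f t / (t - τ) := by
    simp [slope_def_field, h0]
  rw [hs]
  have : t - τ < 0 := by linarith [Set.mem_Iio.mp htlt]
  exact div_nonpos_of_nonneg_of_nonpos ht.le this.le

/-- Positive invariance of the positive quadrant for the reduced 2D Tyson
system. -/
theorem reduced_system_positive_invariant
    (k₁ k₄ k₄' k₆ C : ℝ)
    (hk₁ : 0 < k₁) (hk₄ : 0 < k₄) (hk₄' : 0 < k₄') (hk₆ : 0 < k₆)
    (hC : 0 < C) (T : ℝ) (hT : 0 ≤ T)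
    (y₃ y₄ : ℝ → ℝ)
    (h₃ : ∀ t ∈ Set.Icc (0 : ℝ) T, HasDerivAt y₃
      (k₄' * y₄ t + k₄ / C ^ 2 * y₄ t * (y₃ t) ^ 2 - k₆ * y₃ t) t)
    (h₄ : ∀ t ∈ Set.Icc (0 : ℝ) T, HasDerivAt y₄
      (-(k₄' * y₄ t) - k₄ / C ^ 2 * y₄ t * (y₃ t) ^ 2 + k₁) t)
    (h30 : 0 < y₃ 0) (h40 : 0 < y₄ 0) :
    ∀ t ∈ Set.Icc (0 : ℝ) T, 0 < y₃ t ∧ 0 < y₄ t := by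
  by_contra hcon
  push_neg at hcon
  set m : ℝ → ℝ := fun t => min (y₃ t) (y₄ t) with hm
  set S : Set ℝ := {t | t ∈ Set.Icc (0:ℝ) T ∧ m t ≤ 0} with hSdef
  have hSne : S.Nonempty := by
    obtain ⟨t, ht, hbad⟩ := hcon
    refine ⟨t, ht, ?_⟩
    by_cases h3 : 0 < y₃ t
    · exact min_le_of_right_le (hbad h3)
    · exact min_le_of_left_le (not_lt.mp h3)
  have hSbdd : BddBelow S := ⟨0, fun t ht => ht.1.1⟩
  set τ := sInf S with hτdef
  have hτcl : τ ∈ closure S := csInf_mem_closure hSne hSbdd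
  have hτIcc : τ ∈ Set.Icc (0:ℝ) T := by
    obtain ⟨s, hs⟩ := id hSne
    exact ⟨le_csInf hSne (fun t ht => ht.1.1),
      le_trans (csInf_le hSbdd hs) hs.1.2⟩
  have hcont₃ : ContinuousAt y₃ τ := (h₃ τ hτIcc).continuousAt
  have hcont₄ : ContinuousAt y₄ τ := (h₄ τ hτIcc).continuousAt
  have hcontm : ContinuousAt m τ := hcont₃.min hcont₄
  have hmτ : m τ ≤ 0 := by
    haveI hne : (𝓝[S] τ).NeBot := mem_closure_iff_nhdsWithin_neBot.mp hτcl
    refine le_of_tendsto (hcontm.continuousWithinAt : ContinuousWithinAt m S τ) ?_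
    filter_upwards [self_mem_nhdsWithin] with t ht using ht.2
  have hτpos : 0 < τ := by
    rcases lt_or_eq_of_le hτIcc.1 with h | h
    · exact h
    · exfalso
      rw [← h] at hmτ
      have : 0 < m 0 := lt_min h30 h40
      linarith
  -- positivity strictly before τ
  have hpre : ∀ t, 0 ≤ t → t < τ → 0 < y₃ t ∧ 0 < y₄ t := by
    intro t ht0 htτ
    have htIcc : t ∈ Set.Icc (0:ℝ) T := ⟨ht0, le_trans htτ.le hτIcc.2⟩
    have htS : t ∉ S := fun hts => absurd (csInf_le hSbdd hts) (not_le.mpr htτ)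
    have : ¬ m t ≤ 0 := fun hmt => htS ⟨htIcc, hmt⟩
    exact lt_min_iff.mp (not_le.mp this)
  have hev : ∀ᶠ t in 𝓝[<] τ, 0 < y₃ t ∧ 0 < y₄ t := by
    have h1 : ∀ᶠ t in 𝓝[<] τ, (0:ℝ) < t :=
      eventually_nhdsWithin_of_eventually_nhds (eventually_gt_nhds hτpos)
    filter_upwards [h1, self_mem_nhdsWithin] with t ht0 htτ
    exact hpre t ht0.le htτ
  have hev₃ : ∀ᶠ t in 𝓝[<] τ, 0 < y₃ t := hev.mono (fun t ht => ht.1)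
  have hev₄ : ∀ᶠ t in 𝓝[<] τ, 0 < y₄ t := hev.mono (fun t ht => ht.2)
  have hL : 𝓝[<] τ ≤ 𝓝 τ := nhdsWithin_le_nhds
  have h3nn : 0 ≤ y₃ τ :=
    ge_of_tendsto (hcont₃.tendsto.mono_left hL) (hev₃.mono fun t ht => ht.le)
  have h4nn : 0 ≤ y₄ τ :=
    ge_of_tendsto (hcont₄.tendsto.mono_left hL) (hev₄.mono fun t ht => ht.le)
  -- first show y₄ τ = 0
  have hy4 : y₄ τ = 0 := by
    rcases le_or_gt (y₃ τ) (y₄ τ) with hmin | hmin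
    · -- m τ = y₃ τ ≤ 0, so y₃ τ = 0
      have h3z : y₃ τ = 0 := le_antisymm (by simpa [hm, min_eq_left hmin] using hmτ) h3nn
      have hd3 : k₄' * y₄ τ + k₄ / C ^ 2 * y₄ τ * (y₃ τ) ^ 2 - k₆ * y₃ τ ≤ 0 :=
        left_deriv_nonpos_aux (h₃ τ hτIcc) h3z hev₃
      rw [h3z] at hd3
      simp only [ne_eq, mul_zero, zero_pow, sub_zero, add_zero] at hd3
      nlinarith
    · have h4z : y₄ τ = 0 :=
        le_antisymm (by simpa [hm, min_eq_right hmin.le] using hmτ) h4nn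
      exact h4z
  have hd4 : -(k₄' * y₄ τ) - k₄ / C ^ 2 * y₄ τ * (y₃ τ) ^ 2 + k₁ ≤ 0 :=
    left_deriv_nonpos_aux (h₄ τ hτIcc) hy4 hev₄
  rw [hy4] at hd4
  nlinarith
end
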